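/- arXiv:2508.10347 — 5 statements merged into one kernel-verified Lean document; each statement's English description precedes it below -/
import Mathlib

section
/- Fix ρ̄ > 0, a ∈ ℝ with a ≠ 0, and T ∈ ℝ. Define H(ρ,ũ) = (ρ, ρ·ũ) and G(ρ,ũ) = (ρ·(ũ+T)·(1 − (ρ/ρ̄)^a), ρ·ũ·(ũ+T)·(1 − (ρ/ρ̄)^a)) as maps from (0,∞) × ℝ to ℝ². Then for every ρ > 0 and ũ ∈ ℝ, the vector R₀(ρ,ũ) = (ρ·(1 − (ρ/ρ̄)^a), a·(ρ/ρ̄)^a·(ũ + T)) satisfies (DG(ρ,ũ) − λ₀(ρ,ũ)·DH(ρ,ũ))(R₀(ρ,ũ)) = 0, where D denotes the Fréchet derivative with respect to (ρ,ũ) and λ₀(ρ,ũ) = (ũ + T)·(1 − (ρ/ρ̄)^a). In particular λ₀ is an eigenvalue of the quasilinear system with eigenvector R₀. -/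
/-!
The flux is the conserved quantity scaled by the characteristic speed, `G = λ₀ • H`, so by the
product rule `(DG - λ₀ DH) R = (Dλ₀ R) • H` for every direction `R`. It therefore suffices that
`R₀` is tangent to the level sets of `λ₀`, i.e. `Dλ₀ R₀ = 0`, which is a direct computation.
-/

open ContinuousLinearMap

theorem fderiv_smul_apply_sub_smul_fderiv_apply {𝕜 E F : Type*} [NontriviallyNormedField 𝕜]
    [NormedAddCommGroup E] [NormedSpace 𝕜 E] [NormedAddCommGroup F] [NormedSpace 𝕜 F]
    {c : E → 𝕜} {f : E → F} {x : E} (hc : DifferentiableAt 𝕜 c x)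
    (hf : DifferentiableAt 𝕜 f x) (v : E) :
    fderiv 𝕜 (fun y => c y • f y) x v - c x • fderiv 𝕜 f x v = fderiv 𝕜 c x v • f x := by
  rw [show (fun y => c y • f y) = c • f from rfl, fderiv_smul hc hf]
  simp

section ZeroFamily

variable (ρbar a T : ℝ)

noncomputable def zeroSpeed (p : ℝ × ℝ) : ℝ := (p.2 + T) * (1 - (p.1 / ρbar) ^ a)

variable {ρbar a T}

theorem hasFDerivAt_zeroSpeed {ρ u : ℝ} (hx : ρ / ρbar ≠ 0) :
    HasFDerivAt (zeroSpeed ρbar a T)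
      ((1 - (ρ / ρbar) ^ a) • snd ℝ ℝ ℝ
        - ((u + T) * (a * (ρ / ρbar) ^ (a - 1) / ρbar)) • fst ℝ ℝ ℝ) (ρ, u) := by
  have hpow : HasFDerivAt (fun p : ℝ × ℝ => (p.1 / ρbar) ^ a)
      ((a * (ρ / ρbar) ^ (a - 1) / ρbar) • fst ℝ ℝ ℝ) (ρ, u) := by
    refine (((Real.hasDerivAt_rpow_const (Or.inl hx)).comp ρ
      ((hasDerivAt_id ρ).div_const ρbar)).comp_hasFDerivAt (ρ, u)
        (hasFDerivAt_fst (𝕜 := ℝ))).congr_fderiv ?_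
    simp [div_eq_mul_inv]
  exact (((hasFDerivAt_snd (𝕜 := ℝ) (p := (ρ, u))).add_const T).mul
    ((hasFDerivAt_const (1 : ℝ) (ρ, u)).sub hpow)).congr_fderiv (by ext <;> simp)

theorem fderiv_zeroSpeed_eigenvector {ρ u : ℝ} (hρ : ρ ≠ 0) (hρbar : ρbar ≠ 0) :
    fderiv ℝ (zeroSpeed ρbar a T) (ρ, u)
      (ρ * (1 - (ρ / ρbar) ^ a), a * (ρ / ρbar) ^ a * (u + T)) = 0 := by
  have hx : ρ / ρbar ≠ 0 := div_ne_zero hρ hρbar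
  rw [(hasFDerivAt_zeroSpeed (T := T) (u := u) (a := a) hx).fderiv]
  simp only [sub_apply, smul_apply, coe_fst', coe_snd', smul_eq_mul, Real.rpow_sub_one hx]
  field_simp
  ring

end ZeroFamily

theorem eigenvector_zero_family_general
    (ρbar : ℝ) (hρbar : 0 < ρbar) (a : ℝ) (T : ℝ) :
    ∀ ρ u : ℝ, 0 < ρ →
      fderiv ℝ (fun p : ℝ × ℝ =>
          (p.1 * (p.2 + T) * (1 - (p.1 / ρbar) ^ a),
           p.1 * p.2 * (p.2 + T) * (1 - (p.1 / ρbar) ^ a))) (ρ, u)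
          (ρ * (1 - (ρ / ρbar) ^ a), a * (ρ / ρbar) ^ a * (u + T))
        - ((u + T) * (1 - (ρ / ρbar) ^ a)) •
          fderiv ℝ (fun p : ℝ × ℝ => (p.1, p.1 * p.2)) (ρ, u)
          (ρ * (1 - (ρ / ρbar) ^ a), a * (ρ / ρbar) ^ a * (u + T)) = 0 := by
  intro ρ u hρ
  have hflux : (fun p : ℝ × ℝ => (p.1 * (p.2 + T) * (1 - (p.1 / ρbar) ^ a),
      p.1 * p.2 * (p.2 + T) * (1 - (p.1 / ρbar) ^ a)))
      = fun p => zeroSpeed ρbar a T p • (p.1, p.1 * p.2) := by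
    funext p
    ext <;> simp only [zeroSpeed, Prod.smul_mk, smul_eq_mul] <;> ring
  have hspeed := (hasFDerivAt_zeroSpeed (T := T) (u := u) (a := a)
    (div_ne_zero hρ.ne' hρbar.ne')).differentiableAt
  have hsplit := fderiv_smul_apply_sub_smul_fderiv_apply (f := fun p : ℝ × ℝ => (p.1, p.1 * p.2))
    hspeed (by fun_prop) (ρ * (1 - (ρ / ρbar) ^ a), a * (ρ / ρbar) ^ a * (u + T))
  rw [fderiv_zeroSpeed_eigenvector hρ.ne' hρbar.ne', zero_smul] at hsplit
  rw [hflux]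
  exact hsplit

/-- R₀(ρ,u) = (ρ·(1−(ρ/ρ̄)^a), a·(ρ/ρ̄)^a·(u+T)) is an eigenvector
of the quasilinear system with eigenvalue λ₀(ρ,u) = (u + T)·(1 − (ρ/ρ̄)^a). -/
theorem eigenvector_zero_family
    (ρbar : ℝ) (hρbar : 0 < ρbar) (a : ℝ) (ha : a ≠ 0) (T : ℝ) :
    ∀ ρ u : ℝ, 0 < ρ →
      fderiv ℝ (fun p : ℝ × ℝ =>
          (p.1 * (p.2 + T) * (1 - (p.1 / ρbar) ^ a),
           p.1 * p.2 * (p.2 + T) * (1 - (p.1 / ρbar) ^ a))) (ρ, u)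
          (ρ * (1 - (ρ / ρbar) ^ a), a * (ρ / ρbar) ^ a * (u + T))
        - ((u + T) * (1 - (ρ / ρbar) ^ a)) •
          fderiv ℝ (fun p : ℝ × ℝ => (p.1, p.1 * p.2)) (ρ, u)
          (ρ * (1 - (ρ / ρbar) ^ a), a * (ρ / ρbar) ^ a * (u + T)) = 0 :=
  eigenvector_zero_family_general ρbar hρbar a T
end

section
/- Fix ρ̄ > 0, a ∈ ℝ with a ≠ 0, and T ∈ ℝ. Let λ₀(ρ,ũ) = (ũ + T)·(1 − (ρ/ρ̄)^a) on (0,∞) × ℝ and let R₀(ρ,ũ) = (ρ·(1 − (ρ/ρ̄)^a), a·(ρ/ρ̄)^a·(ũ + T)). Then the 0-characteristic family is linearly degenerate: for every ρ > 0 and ũ ∈ ℝ, the directional derivative of λ₀ at (ρ,ũ) in the direction R₀(ρ,ũ) vanishes, i.e. Dλ₀(ρ,ũ)(R₀(ρ,ũ)) = 0, where D denotes the Fréchet derivative with respect to (ρ,ũ). -/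
/-!
Writing `λ₀(ρ, ũ) = (ũ + T) φ(ρ)` with `φ(ρ) = 1 - (ρ/ρ̄)^a`, the derivative along `R₀` is
`(ũ + T) φ(ρ) (ρ φ'(ρ) + a (ρ/ρ̄)^a)`, and the bracket vanishes by Euler's identity
`ρ · d/dρ (ρ/ρ̄)^a = a (ρ/ρ̄)^a` for the homogeneous function `ρ ↦ (ρ/ρ̄)^a`.
-/

theorem Real.hasDerivAt_div_const_rpow {c x : ℝ} (hc : c ≠ 0) (hx : x ≠ 0) (a : ℝ) :
    HasDerivAt (fun t : ℝ => (t / c) ^ a) (a * (x / c) ^ a / x) x := by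
  have hxc : x / c ≠ 0 := div_ne_zero hx hc
  have h := (Real.hasDerivAt_rpow_const (p := a) (Or.inl hxc)).comp x
    ((hasDerivAt_id x).div_const c)
  refine h.congr_deriv ?_
  rw [Real.rpow_sub_one hxc]
  field_simp

theorem fderiv_add_const_mul_comp_fst_apply {φ : ℝ → ℝ} {φ' ρ : ℝ} (hφ : HasDerivAt φ φ' ρ)
    (T u v w : ℝ) :
    fderiv ℝ (fun p : ℝ × ℝ => (p.2 + T) * φ p.1) (ρ, u) (v, w) =
      (u + T) * (φ' * v) + φ ρ * w := by
  have hfst : HasFDerivAt (fun p : ℝ × ℝ => φ p.1) (φ' • ContinuousLinearMap.fst ℝ ℝ ℝ) (ρ, u) :=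
    hφ.comp_hasFDerivAt (ρ, u) hasFDerivAt_fst
  have hsnd : HasFDerivAt (fun p : ℝ × ℝ => p.2 + T) (ContinuousLinearMap.snd ℝ ℝ ℝ) (ρ, u) :=
    hasFDerivAt_snd.add_const T
  have hprod : HasFDerivAt (fun p : ℝ × ℝ => (p.2 + T) * φ p.1) _ (ρ, u) := hsnd.mul hfst
  rw [hprod.fderiv]
  simp

theorem zero_family_linearly_degenerate_general
    (ρbar : ℝ) (hρbar : 0 < ρbar) (a : ℝ) (T : ℝ) :
    ∀ ρ u : ℝ, 0 < ρ →
      fderiv ℝ (fun p : ℝ × ℝ => (p.2 + T) * (1 - (p.1 / ρbar) ^ a)) (ρ, u)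
        (ρ * (1 - (ρ / ρbar) ^ a), a * (ρ / ρbar) ^ a * (u + T)) = 0 := by
  intro ρ u hρ
  have hφ := (Real.hasDerivAt_div_const_rpow hρbar.ne' hρ.ne' a).const_sub 1
  rw [fderiv_add_const_mul_comp_fst_apply hφ]
  field_simp
  ring

/-- The 0-characteristic family is linearly degenerate:
Dλ₀(ρ,u)(R₀(ρ,u)) = 0. -/
theorem zero_family_linearly_degenerate
    (ρbar : ℝ) (hρbar : 0 < ρbar) (a : ℝ) (ha : a ≠ 0) (T : ℝ) :
    ∀ ρ u : ℝ, 0 < ρ →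
      fderiv ℝ (fun p : ℝ × ℝ => (p.2 + T) * (1 - (p.1 / ρbar) ^ a)) (ρ, u)
        (ρ * (1 - (ρ / ρbar) ^ a), a * (ρ / ρbar) ^ a * (u + T)) = 0 :=
  zero_family_linearly_degenerate_general ρbar hρbar a T
end

section
/- Fix ρ̄ > 0 and T ∈ ℝ, and suppose either a > 0 or a < −1. Let ρ_L, ρ_R > 0 with ρ_L ≠ ρ_R and let ũ ∈ ℝ with ũ + T > 0. Set λ_a(ρ,ũ) = (ũ + T)·(1 − (a+1)·(ρ/ρ̄)^a) and s_a = (ũ + T)·(1 − (ρ_L·(ρ_L/ρ̄)^a − ρ_R·(ρ_R/ρ̄)^a)/(ρ_L − ρ_R)). Then the Lax admissibility condition λ_a(ρ_R,ũ) < s_a < λ_a(ρ_L,ũ) holds if and only if ρ_R > ρ_L (i.e. the a-shock lies to the right of the left state in density). -/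
/-!
In the variable `x = ρ / ρbar` the flux `ρ * (ρ / ρbar) ^ a` is `ρbar * x ^ (a + 1)`, so the shock
speed is the secant slope of the strictly convex function `x ↦ x ^ (a + 1)` between the two states
and the characteristic speeds are its tangent slopes there (all up to the affine map
`v ↦ (u + T) * (1 - v)`). The secant slope of a strictly convex function lies strictly between its
tangent slopes at the left and at the right end, so Lax's inequalities hold exactly when `ρL` is
the left end.
-/

open Set

theorem strictConvexOn_rpow_of_neg {p : ℝ} (hp : p < 0) :
    StrictConvexOn ℝ (Ioi 0) fun x : ℝ => x ^ p := by
  refine StrictMonoOn.strictConvexOn_of_deriv (convex_Ioi 0)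
    (fun x hx => (Real.continuousAt_rpow_const x p (Or.inl (ne_of_gt hx))).continuousWithinAt) ?_
  rw [interior_Ioi]
  intro x hx y hy hxy
  simp only [Real.deriv_rpow_const]
  exact mul_lt_mul_of_neg_left (Real.rpow_lt_rpow_of_neg hx hxy (by linarith)) hp

theorem strictConvexOn_rpow_Ioi {p : ℝ} (hp : 1 < p ∨ p < 0) :
    StrictConvexOn ℝ (Ioi 0) fun x : ℝ => x ^ p :=
  hp.elim (fun h => (strictConvexOn_rpow h).subset Ioi_subset_Ici_self (convex_Ioi 0))
    strictConvexOn_rpow_of_neg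

theorem StrictConvexOn.slope_lt_and_lt_slope_iff {S : Set ℝ} {f f' : ℝ → ℝ} {x y : ℝ}
    (hf : StrictConvexOn ℝ S f) (hf' : ∀ z ∈ S, HasDerivAt f (f' z) z)
    (hx : x ∈ S) (hy : y ∈ S) (hxy : x ≠ y) :
    slope f x y < f' y ∧ f' x < slope f x y ↔ x < y := by
  refine ⟨fun ⟨hlt, _⟩ => hxy.lt_or_gt.resolve_right fun hyx => ?_, fun hlt =>
    ⟨hf.slope_lt_of_hasDerivAt hx hy hlt (hf' y hy), hf.lt_slope_of_hasDerivAt hx hy hlt (hf' x hx)⟩⟩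
  have := hf.lt_slope_of_hasDerivAt hy hx hyx (hf' y hy)
  rw [slope_comm] at this
  exact lt_asymm hlt this

/-- For a > 0 or a < −1 and ũ + T > 0, the Lax admissibility
condition for the a-shock holds iff ρ_R > ρ_L. -/
theorem lax_shock_convex_case
    (ρbar : ℝ) (hρbar : 0 < ρbar) (T : ℝ) (a : ℝ) (ha : 0 < a ∨ a < -1)
    (ρL ρR : ℝ) (hρL : 0 < ρL) (hρR : 0 < ρR) (hne : ρL ≠ ρR)
    (u : ℝ) (hu : 0 < u + T) :
    ((u + T) * (1 - (a + 1) * (ρR / ρbar) ^ a)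
        < (u + T) * (1 - (ρL * (ρL / ρbar) ^ a - ρR * (ρR / ρbar) ^ a) / (ρL - ρR))
      ∧ (u + T) * (1 - (ρL * (ρL / ρbar) ^ a - ρR * (ρR / ρbar) ^ a) / (ρL - ρR))
        < (u + T) * (1 - (a + 1) * (ρL / ρbar) ^ a))
    ↔ ρR > ρL := by
  have hflux : ∀ ρ, ρ ≠ 0 → ρ * (ρ / ρbar) ^ a = ρbar * (ρ / ρbar) ^ (a + 1) := fun ρ hρ => by
    rw [Real.rpow_add_one (div_ne_zero hρ hρbar.ne')]
    field_simp
  have hspeed : (ρL * (ρL / ρbar) ^ a - ρR * (ρR / ρbar) ^ a) / (ρL - ρR)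
      = slope (fun x : ℝ => x ^ (a + 1)) (ρL / ρbar) (ρR / ρbar) := by
    rw [slope_def_field, hflux ρL hρL.ne', hflux ρR hρR.ne']
    field_simp
    ring
  have hconv : StrictConvexOn ℝ (Ioi 0) fun x : ℝ => x ^ (a + 1) :=
    strictConvexOn_rpow_Ioi (ha.imp (fun h => by linarith) (fun h => by linarith))
  have hderiv : ∀ x ∈ Ioi (0 : ℝ), HasDerivAt (fun x : ℝ => x ^ (a + 1)) ((a + 1) * x ^ a) x :=
    fun x hx => by simpa using Real.hasDerivAt_rpow_const (p := a + 1) (Or.inl (ne_of_gt hx))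
  rw [hspeed, mul_lt_mul_iff_right₀ hu, mul_lt_mul_iff_right₀ hu, sub_lt_sub_iff_left,
    sub_lt_sub_iff_left, gt_iff_lt]
  exact (hconv.slope_lt_and_lt_slope_iff hderiv (div_pos hρL hρbar) (div_pos hρR hρbar)
    (by rwa [Ne, div_left_inj' hρbar.ne'])).trans (div_lt_div_iff_of_pos_right hρbar)
end

section
/- Fix ρ̄ > 0, T ∈ ℝ, and a ∈ ℝ with −1 < a < 0. Let ρ_L, ρ_R > 0 with ρ_L ≠ ρ_R and let ũ ∈ ℝ with ũ + T > 0. Set λ_a(ρ,ũ) = (ũ + T)·(1 − (a+1)·(ρ/ρ̄)^a) and s_a = (ũ + T)·(1 − (ρ_L·(ρ_L/ρ̄)^a − ρ_R·(ρ_R/ρ̄)^a)/(ρ_L − ρ_R)). Then the Lax admissibility condition λ_a(ρ_R,ũ) < s_a < λ_a(ρ_L,ũ) holds if and only if ρ_R < ρ_L (i.e. the a-shock lies to the left of the left state in density). -/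
/-!
In the reduced variable `x = ρ / ρbar` the flux `ρ (ρ / ρbar) ^ a` is `ρbar * f x` with
`f x = x ^ (a + 1)`, so the characteristic speeds are `(u + T) (1 - f' x)` and the shock speed is
`(u + T) (1 - slope)`, the slope being that of the chord of `f` between the two states. For
`-1 < a < 0` the function `f` is strictly concave, and for a strictly concave function the chord
slope lies strictly between `f' x_L` and `f' x_R` in the order Lax requires exactly when
`x_R < x_L`.
-/

theorem StrictConcaveOn.lt_slope_and_slope_lt_iff {S : Set ℝ} {f f' : ℝ → ℝ}
    (hf : StrictConcaveOn ℝ S f) {x y : ℝ} (hx : x ∈ S) (hy : y ∈ S) (hxy : x ≠ y)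
    (hfx : HasDerivAt f (f' x) x) (hfy : HasDerivAt f (f' y) y) :
    f' x < slope f y x ∧ slope f y x < f' y ↔ y < x := by
  refine ⟨fun ⟨hlt, hgt⟩ => ?_, fun hyx =>
    ⟨hf.lt_slope_of_hasDerivAt hy hx hyx hfx, hf.slope_lt_of_hasDerivAt hy hx hyx hfy⟩⟩
  refine hxy.lt_or_gt.resolve_left fun hxy' => ?_
  have hleft := hf.slope_lt_of_hasDerivAt hx hy hxy' hfx
  have hright := hf.lt_slope_of_hasDerivAt hx hy hxy' hfy
  rw [slope_comm] at hleft hright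
  linarith

theorem Real.hasDerivAt_rpow_add_one {x : ℝ} (hx : 0 < x) (a : ℝ) :
    HasDerivAt (fun t : ℝ => t ^ (a + 1)) ((a + 1) * x ^ a) x := by
  simpa using Real.hasDerivAt_rpow_const (p := a + 1) (Or.inl hx.ne')

theorem flux_div_sub_eq_slope_rpow {ρbar : ℝ} (hρbar : 0 < ρbar) (a : ℝ) {ρL ρR : ℝ}
    (hρL : 0 < ρL) (hρR : 0 < ρR) :
    (ρL * (ρL / ρbar) ^ a - ρR * (ρR / ρbar) ^ a) / (ρL - ρR)
      = slope (fun x : ℝ => x ^ (a + 1)) (ρR / ρbar) (ρL / ρbar) := by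
  have hflux : ∀ ρ : ℝ, 0 < ρ → ρ * (ρ / ρbar) ^ a = ρbar * (ρ / ρbar) ^ (a + 1) := by
    intro ρ hρ
    rw [Real.rpow_add_one (div_pos hρ hρbar).ne']
    field_simp
  rw [slope_def_field, hflux ρL hρL, hflux ρR hρR]
  field_simp

/-- For −1 < a < 0 and ũ + T > 0, the Lax admissibility
condition for the a-shock holds iff ρ_R < ρ_L. -/
theorem lax_shock_concave_case
    (ρbar : ℝ) (hρbar : 0 < ρbar) (T : ℝ) (a : ℝ) (ha₁ : -1 < a) (ha₂ : a < 0)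
    (ρL ρR : ℝ) (hρL : 0 < ρL) (hρR : 0 < ρR) (hne : ρL ≠ ρR)
    (u : ℝ) (hu : 0 < u + T) :
    ((u + T) * (1 - (a + 1) * (ρR / ρbar) ^ a)
        < (u + T) * (1 - (ρL * (ρL / ρbar) ^ a - ρR * (ρR / ρbar) ^ a) / (ρL - ρR))
      ∧ (u + T) * (1 - (ρL * (ρL / ρbar) ^ a - ρR * (ρR / ρbar) ^ a) / (ρL - ρR))
        < (u + T) * (1 - (a + 1) * (ρL / ρbar) ^ a))
    ↔ ρR < ρL := by
  have hxL : 0 < ρL / ρbar := div_pos hρL hρbar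
  have hxR : 0 < ρR / ρbar := div_pos hρR hρbar
  have hconcave := Real.strictConcaveOn_rpow (p := a + 1) (by linarith) (by linarith)
  rw [flux_div_sub_eq_slope_rpow hρbar a hρL hρR, mul_lt_mul_iff_right₀ hu,
    mul_lt_mul_iff_right₀ hu, sub_lt_sub_iff_left, sub_lt_sub_iff_left, and_comm]
  refine (hconcave.lt_slope_and_slope_lt_iff (f' := fun x => (a + 1) * x ^ a) hxL.le hxR.le
    (by rwa [Ne, div_left_inj' hρbar.ne']) (Real.hasDerivAt_rpow_add_one hxL a)
    (Real.hasDerivAt_rpow_add_one hxR a)).trans ?_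
  exact div_lt_div_iff_of_pos_right hρbar
end

section
/- Fix ρ̄ > 0 and a < 0 (a ≠ 0). Let ρ_L, ρ_R > 0 and ũ_L, ũ_R ∈ ℝ be constants, let α : ℝ → ℝ be continuous with A(t) = ∫₀ᵗ α(s) ds, and define the time-dependent fluxes f₁(ρ,ũ,t) = ρ·(ũ + A(t))·(1 − (ρ/ρ̄)^a) and f₂(ρ,ũ,t) = ρ·ũ·(ũ + A(t))·(1 − (ρ/ρ̄)^a). Let x, ω, u_δ : [0,∞) → ℝ be continuously differentiable with x(0) = 0 and ω(0) = 0, and suppose that for all t ≥ 0: (i) x′(t) = u_δ(t) + A(t); (ii) ω′(t) = −(ρ_L − ρ_R)·x′(t) + (f₁(ρ_L,ũ_L,t) − f₁(ρ_R,ũ_R,t)); (iii) (ω·u_δ)′(t) = −(ρ_L·ũ_L − ρ_R·ũ_R)·x′(t) + (f₂(ρ_L,ũ_L,t) − f₂(ρ_R,ũ_R,t)). Define the piecewise-constant background ρ₀(x,t) = ρ_L for x < x(t) and ρ_R for x > x(t), and ũ₀(x,t) = ũ_L for x < x(t) and ũ_R for x > x(t). Then the delta-shock (ρ₀ + ω(t)·δ(x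 − x(t)), ũ₀) is a distributional solution of the conservative system: for every smooth φ : ℝ × ℝ → ℝ with compact support contained in ℝ × (0,∞), both ∫₀^∞∫_ℝ (ρ₀·∂ₜφ + f₁(ρ₀,ũ₀,t)·∂ₓφ) dx dt + ∫₀^∞ ω(t)·(∂ₜφ(x(t),t) + x′(t)·∂ₓφ(x(t),t)) dt = 0 and ∫₀^∞∫_ℝ (ρ₀·ũ₀·∂ₜφ + f₂(ρ₀,ũ₀,t)·∂ₓφ) dx dt + ∫₀^∞ ω(t)·u_δ(t)·(∂ₜφ(x(t),t) + x′(t)·∂ₓφ(x(t),t)) dt = 0. -/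
open MeasureTheory Set
open MeasureTheory Set

noncomputable def DSDx (φ : ℝ × ℝ → ℝ) (p : ℝ × ℝ) : ℝ := fderiv ℝ φ p (1, 0)
noncomputable def DSDt (φ : ℝ × ℝ → ℝ) (p : ℝ × ℝ) : ℝ := fderiv ℝ φ p (0, 1)

variable {φ : ℝ × ℝ → ℝ}

lemma DS_fderiv_apply (p : ℝ × ℝ) (v : ℝ × ℝ) :
    fderiv ℝ φ p v = v.1 * DSDx φ p + v.2 * DSDt φ p := by
  have hv : v = v.1 • ((1:ℝ), (0:ℝ)) + v.2 • ((0:ℝ), (1:ℝ)) := by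
    simp [Prod.ext_iff]
  rw [hv, map_add, _root_.map_smul, _root_.map_smul]
  simp [DSDx, DSDt, smul_eq_mul]

lemma DS_hasDerivAt_fst (hφ : ContDiff ℝ (⊤ : ℕ∞) φ) (y t : ℝ) :
    HasDerivAt (fun z => φ (z, t)) (DSDx φ (y, t)) y := by
  have h := (hφ.differentiable (by simp) (y, t)).hasFDerivAt
  have hm : HasDerivAt (fun z : ℝ => (z, t)) ((1:ℝ), (0:ℝ)) y :=
    (hasDerivAt_id y).prodMk (hasDerivAt_const y t)
  exact h.comp_hasDerivAt y hm

lemma DS_hasDerivAt_snd (hφ : ContDiff ℝ (⊤ : ℕ∞) φ) (y t : ℝ) :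
    HasDerivAt (fun τ => φ (y, τ)) (DSDt φ (y, t)) t := by
  have h := (hφ.differentiable (by simp) (y, t)).hasFDerivAt
  have hm : HasDerivAt (fun τ : ℝ => (y, τ)) ((0:ℝ), (1:ℝ)) t :=
    (hasDerivAt_const t y).prodMk (hasDerivAt_id t)
  exact h.comp_hasDerivAt t hm

lemma DS_deriv_fst (hφ : ContDiff ℝ (⊤ : ℕ∞) φ) (y t : ℝ) :
    deriv (fun z => φ (z, t)) y = DSDx φ (y, t) := (DS_hasDerivAt_fst hφ y t).deriv

lemma DS_deriv_snd (hφ : ContDiff ℝ (⊤ : ℕ∞) φ) (y t : ℝ) :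
    deriv (fun τ => φ (y, τ)) t = DSDt φ (y, t) := (DS_hasDerivAt_snd hφ y t).deriv

lemma DS_hasDerivAt_curve (hφ : ContDiff ℝ (⊤ : ℕ∞) φ) {u : ℝ → ℝ} {u' t : ℝ}
    (hu : HasDerivAt u u' t) :
    HasDerivAt (fun s => φ (u s, s)) (u' * DSDx φ (u t, t) + DSDt φ (u t, t)) t := by
  have h := (hφ.differentiable (by simp) (u t, t)).hasFDerivAt
  have hm : HasDerivAt (fun s : ℝ => (u s, s)) ((u', (1:ℝ))) t := hu.prodMk (hasDerivAt_id t)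
  have H : HasDerivAt (fun s => φ (u s, s)) (fderiv ℝ φ (u t, t) (u', 1)) t :=
    HasFDerivAt.comp_hasDerivAt (f := fun s => (u s, s)) t h hm
  simpa [DS_fderiv_apply] using H

lemma DS_contDx (hφ : ContDiff ℝ (⊤ : ℕ∞) φ) : Continuous (DSDx φ) :=
  (hφ.continuous_fderiv (by simp)).clm_apply continuous_const

lemma DS_contDt (hφ : ContDiff ℝ (⊤ : ℕ∞) φ) : Continuous (DSDt φ) :=
  (hφ.continuous_fderiv (by simp)).clm_apply continuous_const

lemma DS_Dx_zero (p : ℝ × ℝ) (hp : p ∉ tsupport φ) : DSDx φ p = 0 := by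
  have : fderiv ℝ φ p = 0 := by
    by_contra h
    exact hp (support_fderiv_subset ℝ (by simpa [Function.mem_support] using h))
  simp [DSDx, this]

lemma DS_Dt_zero (p : ℝ × ℝ) (hp : p ∉ tsupport φ) : DSDt φ p = 0 := by
  have : fderiv ℝ φ p = 0 := by
    by_contra h
    exact hp (support_fderiv_subset ℝ (by simpa [Function.mem_support] using h))
  simp [DSDt, this]
-- chunk 2: bounds, integrability, FTC, translation
lemma DS_glob_bound {g : ℝ × ℝ → ℝ} (hsupp : HasCompactSupport φ)
    (hgc : Continuous g) (hg0 : ∀ p ∉ tsupport φ, g p = 0) :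
    ∃ C : ℝ, 0 ≤ C ∧ ∀ p, |g p| ≤ C := by
  obtain ⟨C, hC⟩ := hsupp.exists_bound_of_continuousOn hgc.continuousOn
  refine ⟨max C 0, le_max_right _ _, fun p => ?_⟩
  by_cases hp : p ∈ tsupport φ
  · exact le_trans (by simpa [Real.norm_eq_abs] using hC p hp) (le_max_left _ _)
  · simp [hg0 p hp]

lemma DS_support_bounds (hsupp : HasCompactSupport φ)
    (hsub : tsupport φ ⊆ Set.univ ×ˢ Set.Ioi (0:ℝ)) :
    ∃ M ε T : ℝ, 0 < ε ∧ ε ≤ T ∧ 0 ≤ M ∧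
      ∀ p ∈ tsupport φ, |p.1| ≤ M ∧ ε ≤ p.2 ∧ p.2 ≤ T := by
  rcases eq_empty_or_nonempty (tsupport φ) with hK | hK
  · exact ⟨0, 1, 1, one_pos, le_rfl, le_rfl, fun p hp => by simp [hK] at hp⟩
  · obtain ⟨R, hR⟩ := hsupp.isBounded.subset_closedBall 0
    have hRb : ∀ p ∈ tsupport φ, |p.1| ≤ R ∧ |p.2| ≤ R := by
      intro p hp
      have := hR hp
      rw [Metric.mem_closedBall, dist_zero_right, Prod.norm_def] at this
      exact ⟨le_trans (le_max_left _ _) this, le_trans (le_max_right _ _) this⟩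
    obtain ⟨x, hxK, hxmin⟩ := hsupp.exists_isMinOn hK continuous_snd.continuousOn
    have hx2 : 0 < x.2 := (hsub hxK).2
    refine ⟨max R 0, x.2, max R x.2, hx2, le_max_right _ _, le_max_right _ _, fun p hp => ?_⟩
    refine ⟨le_trans (hRb p hp).1 (le_max_left _ _), hxmin hp, ?_⟩
    exact le_trans (le_trans (le_abs_self _) (hRb p hp).2) (le_max_left _ _)

lemma DS_slice_integrable {g : ℝ × ℝ → ℝ} (hgc : Continuous g)
    {M : ℝ} (hM : ∀ p ∈ tsupport φ, |p.1| ≤ M)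
    (hg0 : ∀ p ∉ tsupport φ, g p = 0) (t : ℝ) :
    Integrable (fun y => g (y, t)) := by
  apply (hgc.comp (continuous_id.prodMk continuous_const)).integrable_of_hasCompactSupport
  have hsub : Function.support (fun y => g (y, t)) ⊆ Icc (-M) M := by
    intro y hy
    have hyt : (y, t) ∈ tsupport φ := by
      by_contra h
      exact hy (hg0 _ h)
    have := hM _ hyt
    exact abs_le.1 this
  exact IsCompact.of_isClosed_subset isCompact_Icc isClosed_closure
    (closure_minimal hsub isClosed_Icc)

lemma DS_FTC_Iio {g g' : ℝ → ℝ} (hg : ∀ y, HasDerivAt g (g' y) y) (hc : Continuous g')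
    {M : ℝ} (hM : 0 ≤ M) (h0g : ∀ y, M < |y| → g y = 0) (h0 : ∀ y, M < |y| → g' y = 0)
    (hint : Integrable g') (c : ℝ) :
    ∫ y in Iio c, g' y = g c := by
  set R : ℝ := M + |c| + 1 with hR
  have hRc : -R ≤ c := by
    have : -R ≤ -|c| := by simp [hR]; linarith [abs_nonneg c]
    linarith [neg_abs_le c]
  rw [← integral_Iic_eq_integral_Iio, ← Set.Iic_union_Ioc_eq_Iic hRc,
    setIntegral_union (Set.Iic_disjoint_Ioc le_rfl) measurableSet_Ioc
      hint.integrableOn hint.integrableOn]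
  have h1 : ∫ y in Iic (-R), g' y = 0 := by
    rw [setIntegral_congr_fun measurableSet_Iic (fun y hy => h0 y ?_), integral_zero]
    simp only [mem_Iic] at hy
    have : y ≤ -R := hy
    have hy' : y < -M := by simp [hR] at this ⊢; linarith [abs_nonneg c]
    rw [abs_of_nonpos (by linarith)]; linarith
  rw [h1, zero_add, ← intervalIntegral.integral_of_le hRc,
    intervalIntegral.integral_eq_sub_of_hasDerivAt (fun y _ => hg y)
      ((hc.intervalIntegrable _ _))]
  rw [h0g (-R) (by rw [abs_of_nonpos (by simp [hR]; linarith [abs_nonneg c])]; simp [hR]; linarith [abs_nonneg c])]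
  ring

lemma DS_FTC_Ioi {g g' : ℝ → ℝ} (hg : ∀ y, HasDerivAt g (g' y) y) (hc : Continuous g')
    {M : ℝ} (hM : 0 ≤ M) (h0g : ∀ y, M < |y| → g y = 0) (h0 : ∀ y, M < |y| → g' y = 0)
    (hint : Integrable g') (c : ℝ) :
    ∫ y in Ioi c, g' y = -g c := by
  set R : ℝ := M + |c| + 1 with hR
  have hRc : c ≤ R := by
    have := le_abs_self c; simp [hR]; linarith
  rw [← Set.Ioc_union_Ioi_eq_Ioi hRc,
    setIntegral_union (Set.Ioc_disjoint_Ioi le_rfl) measurableSet_Ioi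
      hint.integrableOn hint.integrableOn]
  have h1 : ∫ y in Ioi R, g' y = 0 := by
    rw [setIntegral_congr_fun measurableSet_Ioi (fun y hy => h0 y ?_), integral_zero]
    simp only [mem_Ioi] at hy
    rw [abs_of_pos (by simp [hR] at hy ⊢; linarith [abs_nonneg c])]
    simp [hR] at hy ⊢; linarith [abs_nonneg c]
  rw [h1, add_zero, ← intervalIntegral.integral_of_le hRc,
    intervalIntegral.integral_eq_sub_of_hasDerivAt (fun y _ => hg y)
      ((hc.intervalIntegrable _ _))]
  rw [h0g R (by rw [abs_of_nonneg (by simp [hR]; linarith [abs_nonneg c])]; simp [hR]; linarith [abs_nonneg c])]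
  ring

lemma DS_translate_Iio (f : ℝ → ℝ) (c : ℝ) :
    ∫ z in Iio (0:ℝ), f (z + c) = ∫ y in Iio c, f y := by
  have h := (measurePreserving_add_right (volume : Measure ℝ) c).setIntegral_preimage_emb
    (measurableEmbedding_addRight c) f (Iio c)
  have hpre : (fun z : ℝ => z + c) ⁻¹' Iio c = Iio (0:ℝ) := by
    ext z; simp [lt_iff_lt_of_le_iff_le]
  simpa [hpre] using h

lemma DS_translate_Ioi (f : ℝ → ℝ) (c : ℝ) :
    ∫ z in Ioi (0:ℝ), f (z + c) = ∫ y in Ioi c, f y := by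
  have h := (measurePreserving_add_right (volume : Measure ℝ) c).setIntegral_preimage_emb
    (measurableEmbedding_addRight c) f (Ioi c)
  have hpre : (fun z : ℝ => z + c) ⁻¹' Ioi c = Ioi (0:ℝ) := by
    ext z; simp
  simpa [hpre] using h
-- chunk 3: parametric derivative and continuity
lemma DS_param_hasDerivAt (hφ : ContDiff ℝ (⊤ : ℕ∞) φ) (hsupp : HasCompactSupport φ)
    {X : ℝ → ℝ} (hX : ContDiff ℝ 1 X)
    {M : ℝ} (hM : ∀ p ∈ tsupport φ, |p.1| ≤ M)
    (s : Set ℝ) (t₀ : ℝ) :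
    HasDerivAt (fun t => ∫ z in s, φ (z + X t, t))
      (∫ z in s, (deriv X t₀ * DSDx φ (z + X t₀, t₀) + DSDt φ (z + X t₀, t₀))) t₀ := by
  have hXc : Continuous X := hX.continuous
  have hX' : Continuous (deriv X) := hX.continuous_deriv le_rfl
  obtain ⟨B, hB⟩ := isCompact_Icc.exists_bound_of_continuousOn
    (s := Icc (t₀ - 1) (t₀ + 1)) hXc.continuousOn
  obtain ⟨B', hB'⟩ := isCompact_Icc.exists_bound_of_continuousOn
    (s := Icc (t₀ - 1) (t₀ + 1)) hX'.continuousOn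
  have hB'0 : 0 ≤ B' := le_trans (norm_nonneg _)
    (hB' t₀ ⟨by linarith, by linarith⟩)
  obtain ⟨C1, hC1pos, hC1⟩ := DS_glob_bound hsupp (DS_contDx hφ) (DS_Dx_zero (φ := φ))
  obtain ⟨C2, hC2pos, hC2⟩ := DS_glob_bound hsupp (DS_contDt hφ) (DS_Dt_zero (φ := φ))
  set bound : ℝ → ℝ := (Icc (-(M + B + 1)) (M + B + 1)).indicator
    (fun _ => B' * C1 + C2) with hbound
  have key := hasDerivAt_integral_of_dominated_loc_of_deriv_le
    (μ := volume.restrict s) (x₀ := t₀)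
    (F := fun t z => φ (z + X t, t))
    (F' := fun t z => deriv X t * DSDx φ (z + X t, t) + DSDt φ (z + X t, t))
    (bound := bound) (Metric.ball_mem_nhds t₀ one_pos)
    (Filter.Eventually.of_forall (fun t =>
      ((hφ.continuous.comp ((continuous_id.add continuous_const).prodMk
        continuous_const)).aestronglyMeasurable)))
    ?hFint ?hF'meas ?hbnd ?hbint ?hdiff
  · exact key.2
  case hFint =>
    apply Integrable.restrict
    apply (hφ.continuous.comp ((continuous_id.add continuous_const).prodMk
      continuous_const)).integrable_of_hasCompactSupport
    have hsub : Function.support (fun z => φ (z + X t₀, t₀)) ⊆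
        Icc (-(M + |X t₀|)) (M + |X t₀|) := by
      intro z hz
      have hzt : (z + X t₀, t₀) ∈ tsupport φ := subset_closure hz
      have h' : |z + X t₀| ≤ M := hM _ hzt
      obtain ⟨hl, hr⟩ := abs_le.1 h'
      simp only [mem_Icc]
      constructor
      · linarith [le_abs_self (X t₀)]
      · linarith [neg_abs_le (X t₀)]
    exact IsCompact.of_isClosed_subset isCompact_Icc isClosed_closure
      (closure_minimal hsub isClosed_Icc)
  case hF'meas =>
    exact ((hX'.comp continuous_const).mul ((DS_contDx hφ).comp
      (((continuous_id.add (hXc.comp continuous_const))).prodMk continuous_const))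
      |>.add ((DS_contDt hφ).comp
      (((continuous_id.add (hXc.comp continuous_const))).prodMk continuous_const))).aestronglyMeasurable
  case hbnd =>
    refine Filter.Eventually.of_forall (fun z => fun t ht => ?_)
    have htIcc : t ∈ Icc (t₀ - 1) (t₀ + 1) := by
      rw [Metric.mem_ball, Real.dist_eq] at ht
      constructor <;> [linarith [abs_le.1 ht.le] ; linarith [(abs_le.1 ht.le).2]]
    show ‖deriv X t * DSDx φ (z + X t, t) + DSDt φ (z + X t, t)‖ ≤ bound z
    by_cases hzt : (z + X t, t) ∈ tsupport φ
    · have hz1 : |z + X t| ≤ M := (hM _ hzt)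
      have hXt : ‖X t‖ ≤ B := hB t htIcc
      have hzIcc : z ∈ Icc (-(M + B + 1)) (M + B + 1) := by
        rw [Real.norm_eq_abs] at hXt
        obtain ⟨ha1, ha2⟩ := abs_le.1 hz1
        obtain ⟨hb1, hb2⟩ := abs_le.1 hXt
        simp only [mem_Icc]
        constructor
        · linarith
        · linarith
      rw [hbound, indicator_of_mem hzIcc]
      have h1 : ‖deriv X t‖ ≤ B' := hB' t htIcc
      rw [Real.norm_eq_abs] at h1 ⊢
      calc |deriv X t * DSDx φ (z + X t, t) + DSDt φ (z + X t, t)|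
          ≤ |deriv X t * DSDx φ (z + X t, t)| + |DSDt φ (z + X t, t)| := abs_add_le _ _
        _ ≤ B' * C1 + C2 := add_le_add
            (by rw [abs_mul]
                exact mul_le_mul h1 (hC1 _) (abs_nonneg _) hB'0) (hC2 _)
    · have h1 : DSDx φ (z + X t, t) = 0 := DS_Dx_zero _ hzt
      have h2 : DSDt φ (z + X t, t) = 0 := DS_Dt_zero _ hzt
      rw [h1, h2, mul_zero, add_zero]
      simp only [norm_zero]
      apply indicator_nonneg
      intro _ _
      positivity
  case hbint =>
    apply Integrable.restrict
    rw [hbound, integrable_indicator_iff measurableSet_Icc]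
    exact integrableOn_const measure_Icc_lt_top.ne
  case hdiff =>
    refine Filter.Eventually.of_forall (fun z => fun t _ => ?_)
    have hu : HasDerivAt (fun s => z + X s) (deriv X t) t := by
      exact ((hasDerivAt_const t z).add (hX.differentiable one_ne_zero t).hasDerivAt).congr_deriv (zero_add _)
    exact DS_hasDerivAt_curve hφ hu

lemma DS_param_continuous (hsupp : HasCompactSupport φ)
    {X : ℝ → ℝ} (hXc : Continuous X)
    {g : ℝ × ℝ → ℝ} (hgc : Continuous g) (hg0 : ∀ p ∉ tsupport φ, g p = 0)
    {M ε T : ℝ} (hbounds : ∀ p ∈ tsupport φ, |p.1| ≤ M ∧ ε ≤ p.2 ∧ p.2 ≤ T)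
    (s : Set ℝ) :
    Continuous (fun t => ∫ z in s, g (z + X t, t)) := by
  obtain ⟨B, hB⟩ := isCompact_Icc.exists_bound_of_continuousOn
    (s := Icc ε T) hXc.continuousOn
  obtain ⟨C, hCpos, hC⟩ := DS_glob_bound hsupp hgc hg0
  apply continuous_of_dominated (bound := (Icc (-(M + B + 1)) (M + B + 1)).indicator
    (fun _ => C))
  · intro t
    exact ((hgc.comp ((continuous_id.add continuous_const).prodMk
      continuous_const)).aestronglyMeasurable)
  · intro t
    refine Filter.Eventually.of_forall (fun z => ?_)
    by_cases hzt : (z + X t, t) ∈ tsupport φ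
    · have h1 : |z + X t| ≤ M := (hbounds _ hzt).1
      have ht : t ∈ Icc ε T := ⟨(hbounds _ hzt).2.1, (hbounds _ hzt).2.2⟩
      have hXt : ‖X t‖ ≤ B := hB t ht
      rw [Real.norm_eq_abs] at hXt
      have hzIcc : z ∈ Icc (-(M + B + 1)) (M + B + 1) := by
        obtain ⟨ha1, ha2⟩ := abs_le.1 h1
        obtain ⟨hb1, hb2⟩ := abs_le.1 hXt
        simp only [mem_Icc]
        constructor
        · linarith
        · linarith
      rw [indicator_of_mem hzIcc, Real.norm_eq_abs]
      exact hC _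
    · rw [hg0 _ hzt]
      simp only [norm_zero]
      apply indicator_nonneg
      intro _ _
      exact hCpos
  · apply Integrable.restrict
    rw [integrable_indicator_iff measurableSet_Icc]
    exact integrableOn_const measure_Icc_lt_top.ne
  · refine Filter.Eventually.of_forall (fun z => ?_)
    exact hgc.comp ((continuous_const.add hXc).prodMk continuous_id)
-- chunk 4 : the key lemma
lemma DS_key (cL cR : ℝ) (gL gR : ℝ → ℝ) (hgL : Continuous gL) (hgR : Continuous gR)
    (X w : ℝ → ℝ) (hX : ContDiff ℝ 1 X) (hw : ContDiff ℝ 1 w)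
    (hODE : ∀ t : ℝ, 0 ≤ t → deriv w t = -(cL - cR) * deriv X t + (gL t - gR t))
    (φ : ℝ × ℝ → ℝ) (hφ : ContDiff ℝ (⊤ : ℕ∞) φ) (hsupp : HasCompactSupport φ)
    (hsub : tsupport φ ⊆ Set.univ ×ˢ Set.Ioi (0:ℝ)) :
    (∫ t in Set.Ioi (0:ℝ), ∫ y : ℝ,
        ((if y < X t then cL else cR) * deriv (fun τ => φ (y, τ)) t
          + (if y < X t then gL t else gR t) * deriv (fun z => φ (z, t)) y))
      + (∫ t in Set.Ioi (0:ℝ),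
          w t * (deriv (fun τ => φ (X t, τ)) t
            + deriv X t * deriv (fun z => φ (z, t)) (X t))) = 0 := by
  obtain ⟨M, ε, T, hε, hεT, hM0, hbounds⟩ := DS_support_bounds hsupp hsub
  have hM : ∀ p ∈ tsupport φ, |p.1| ≤ M := fun p hp => (hbounds p hp).1
  have hXc : Continuous X := hX.continuous
  have hX' : Continuous (deriv X) := hX.continuous_deriv le_rfl
  have hvan : ∀ t : ℝ, t ∉ Icc ε T → ∀ y : ℝ, (y, t) ∉ tsupport φ := by
    intro t ht y hyt
    exact ht ⟨(hbounds _ hyt).2.1, (hbounds _ hyt).2.2⟩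
  have hφvan : ∀ t ∉ Icc ε T, ∀ y, φ (y, t) = 0 := fun t ht y =>
    image_eq_zero_of_notMem_tsupport (hvan t ht y)
  simp only [DS_deriv_fst hφ, DS_deriv_snd hφ]
  -- abbreviations
  have hDtint : ∀ t, Integrable (fun y => DSDt φ (y, t)) :=
    DS_slice_integrable (DS_contDt hφ) hM (DS_Dt_zero (φ := φ))
  have hDxint : ∀ t, Integrable (fun y => DSDx φ (y, t)) :=
    DS_slice_integrable (DS_contDx hφ) hM (DS_Dx_zero (φ := φ))
  have hφxvan : ∀ t y, M < |y| → φ (y, t) = 0 := fun t y hy =>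
    image_eq_zero_of_notMem_tsupport (fun hmem => absurd (hM _ hmem) (not_le.2 hy))
  have hDxvan : ∀ t y, M < |y| → DSDx φ (y, t) = 0 := fun t y hy =>
    DS_Dx_zero _ (fun hmem => absurd (hM _ hmem) (not_le.2 hy))
  have hFTCIio : ∀ t c : ℝ, ∫ y in Iio c, DSDx φ (y, t) = φ (c, t) := fun t c =>
    DS_FTC_Iio (fun y => DS_hasDerivAt_fst hφ y t)
      ((DS_contDx hφ).comp (continuous_id.prodMk continuous_const)) hM0
      (hφxvan t) (hDxvan t) (hDxint t) c
  have hFTCIoi : ∀ t c : ℝ, ∫ y in Ioi c, DSDx φ (y, t) = -φ (c, t) := fun t c =>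
    DS_FTC_Ioi (fun y => DS_hasDerivAt_fst hφ y t)
      ((DS_contDx hφ).comp (continuous_id.prodMk continuous_const)) hM0
      (hφxvan t) (hDxvan t) (hDxint t) c
  -- the pieces
  set Hm : ℝ → ℝ := fun t => ∫ y in Iio (X t), DSDt φ (y, t) with hHm
  set Hp : ℝ → ℝ := fun t => ∫ y in Ioi (X t), DSDt φ (y, t) with hHp
  set inn : ℝ → ℝ := fun t => ∫ y : ℝ,
      ((if y < X t then cL else cR) * DSDt φ (y, t)
        + (if y < X t then gL t else gR t) * DSDx φ (y, t)) with hinn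
  set lin : ℝ → ℝ := fun t =>
      w t * (DSDt φ (X t, t) + deriv X t * DSDx φ (X t, t)) with hlin
  -- inner splitting
  have hinner_eq : ∀ t, inn t = cL * Hm t + cR * Hp t + (gL t - gR t) * φ (X t, t) := by
    intro t
    have hLint : Integrable (fun y => cL * DSDt φ (y, t) + gL t * DSDx φ (y, t)) :=
      ((hDtint t).const_mul cL).add ((hDxint t).const_mul (gL t))
    have hRint : Integrable (fun y => cR * DSDt φ (y, t) + gR t * DSDx φ (y, t)) :=
      ((hDtint t).const_mul cR).add ((hDxint t).const_mul (gR t))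
    have hptw : ∀ y : ℝ,
        ((if y < X t then cL else cR) * DSDt φ (y, t)
          + (if y < X t then gL t else gR t) * DSDx φ (y, t))
        = (Iio (X t)).indicator (fun y => cL * DSDt φ (y, t) + gL t * DSDx φ (y, t)) y
          + (Ici (X t)).indicator (fun y => cR * DSDt φ (y, t) + gR t * DSDx φ (y, t)) y := by
      intro y
      by_cases hy : y < X t
      · simp [Set.indicator_apply, mem_Iio, mem_Ici, hy, not_le.2 hy]
      · simp [Set.indicator_apply, mem_Iio, mem_Ici, hy, not_lt.1 hy]
    rw [hinn]
    simp only []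
    rw [integral_congr_ae (Filter.Eventually.of_forall hptw)]
    rw [integral_add (hLint.indicator measurableSet_Iio) (hRint.indicator measurableSet_Ici),
      integral_indicator measurableSet_Iio, integral_indicator measurableSet_Ici,
      integral_Ici_eq_integral_Ioi]
    rw [integral_add ((hDtint t).integrableOn.const_mul cL) ((hDxint t).integrableOn.const_mul (gL t)),
      integral_add ((hDtint t).integrableOn.const_mul cR) ((hDxint t).integrableOn.const_mul (gR t))]
    rw [integral_const_mul, integral_const_mul, integral_const_mul, integral_const_mul,
      hFTCIio t (X t), hFTCIoi t (X t)]
    have hm' : Hm t = ∫ y in Iio (X t), DSDt φ (y, t) := rfl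
    have hp' : Hp t = ∫ y in Ioi (X t), DSDt φ (y, t) := rfl
    rw [hm', hp']
    ring
  -- the potential F and its derivative
  have hGm := fun t₀ => DS_param_hasDerivAt hφ hsupp hX hM (Iio 0) t₀
  have hGp := fun t₀ => DS_param_hasDerivAt hφ hsupp hX hM (Ioi 0) t₀
  have hF' : ∀ t : ℝ, 0 ≤ t →
      HasDerivAt (fun s => cL * (∫ z in Iio (0:ℝ), φ (z + X s, s))
        + cR * (∫ z in Ioi (0:ℝ), φ (z + X s, s)) + w s * φ (X s, s))
        (inn t + lin t) t := by
    intro t ht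
    have h3 : HasDerivAt (fun s => φ (X s, s))
        (deriv X t * DSDx φ (X t, t) + DSDt φ (X t, t)) t :=
      DS_hasDerivAt_curve hφ (hX.differentiable one_ne_zero t).hasDerivAt
    have h4 : HasDerivAt w (deriv w t) t := (hw.differentiable one_ne_zero t).hasDerivAt
    have hF := (((hGm t).const_mul cL).add ((hGp t).const_mul cR)).add (h4.mul h3)
    have e1 : ∫ z in Iio (0:ℝ), (deriv X t * DSDx φ (z + X t, t) + DSDt φ (z + X t, t))
        = deriv X t * φ (X t, t) + Hm t := by
      rw [DS_translate_Iio (fun y => deriv X t * DSDx φ (y, t) + DSDt φ (y, t)) (X t)]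
      rw [integral_add ((hDxint t).integrableOn.const_mul (deriv X t)) (hDtint t).integrableOn,
        integral_const_mul, hFTCIio t (X t)]
    have e2 : ∫ z in Ioi (0:ℝ), (deriv X t * DSDx φ (z + X t, t) + DSDt φ (z + X t, t))
        = -(deriv X t * φ (X t, t)) + Hp t := by
      rw [DS_translate_Ioi (fun y => deriv X t * DSDx φ (y, t) + DSDt φ (y, t)) (X t)]
      rw [integral_add ((hDxint t).integrableOn.const_mul (deriv X t)) (hDtint t).integrableOn,
        integral_const_mul, hFTCIoi t (X t)]
      rw [mul_neg]
    rw [e1, e2] at hF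
    exact hF.congr_deriv (by rw [hinner_eq t, hODE t ht, hlin]; ring)
  -- continuity
  have hcurve : Continuous (fun t => (X t, t)) := hXc.prodMk continuous_id
  have hφΓc : Continuous (fun t => φ (X t, t)) := hφ.continuous.comp hcurve
  have hHmc : Continuous Hm := by
    have hrw : Hm = fun t => ∫ z in Iio (0:ℝ), DSDt φ (z + X t, t) :=
      funext fun t => (DS_translate_Iio (fun y => DSDt φ (y, t)) (X t)).symm
    rw [hrw]
    exact DS_param_continuous hsupp hXc (DS_contDt hφ) (DS_Dt_zero (φ := φ)) hbounds (Iio 0)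
  have hHpc : Continuous Hp := by
    have hrw : Hp = fun t => ∫ z in Ioi (0:ℝ), DSDt φ (z + X t, t) :=
      funext fun t => (DS_translate_Ioi (fun y => DSDt φ (y, t)) (X t)).symm
    rw [hrw]
    exact DS_param_continuous hsupp hXc (DS_contDt hφ) (DS_Dt_zero (φ := φ)) hbounds (Ioi 0)
  have hinnc : Continuous inn := by
    rw [funext hinner_eq]
    exact ((continuous_const.mul hHmc).add (continuous_const.mul hHpc)).add
      ((hgL.sub hgR).mul hφΓc)
  have hlinc : Continuous lin := by
    rw [hlin]
    exact hw.continuous.mul (((DS_contDt hφ).comp hcurve).add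
      (hX'.mul ((DS_contDx hφ).comp hcurve)))
  -- vanishing off Icc ε T
  have hHm0 : ∀ t ∉ Icc ε T, Hm t = 0 := by
    intro t ht
    rw [hHm]
    simp only []
    rw [setIntegral_congr_fun measurableSet_Iio (fun y _ => DS_Dt_zero _ (hvan t ht y)),
      integral_zero]
  have hHp0 : ∀ t ∉ Icc ε T, Hp t = 0 := by
    intro t ht
    rw [hHp]
    simp only []
    rw [setIntegral_congr_fun measurableSet_Ioi (fun y _ => DS_Dt_zero _ (hvan t ht y)),
      integral_zero]
  have hinn0 : ∀ t ∉ Icc ε T, inn t = 0 := by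
    intro t ht
    rw [hinner_eq t, hHm0 t ht, hHp0 t ht, hφvan t ht]
    ring
  have hlin0 : ∀ t ∉ Icc ε T, lin t = 0 := by
    intro t ht
    rw [hlin]
    simp only []
    rw [DS_Dt_zero _ (hvan t ht (X t)), DS_Dx_zero _ (hvan t ht (X t))]
    ring
  -- compact support of inn and lin
  have hcs : ∀ (h : ℝ → ℝ), (∀ t ∉ Icc ε T, h t = 0) → HasCompactSupport h := by
    intro h h0
    have hsub' : Function.support h ⊆ Icc ε T := by
      intro t ht
      by_contra hc
      exact ht (h0 t hc)
    exact IsCompact.of_isClosed_subset isCompact_Icc isClosed_closure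
      (closure_minimal hsub' isClosed_Icc)
  have hinnInt : IntegrableOn inn (Ioi (0:ℝ)) :=
    (hinnc.integrable_of_hasCompactSupport (hcs inn hinn0)).integrableOn
  have hlinInt : IntegrableOn lin (Ioi (0:ℝ)) :=
    (hlinc.integrable_of_hasCompactSupport (hcs lin hlin0)).integrableOn
  -- assemble
  have hIcc_sub : ∀ t ∉ Ioc (ε/2) (T+1), t ∉ Icc ε T := by
    intro t ht hmem
    exact ht ⟨by linarith [hmem.1], by linarith [hmem.2]⟩
  calc (∫ t in Ioi (0:ℝ), inn t) + (∫ t in Ioi (0:ℝ), lin t)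
      = ∫ t in Ioi (0:ℝ), (inn t + lin t) := (integral_add hinnInt hlinInt).symm
    _ = ∫ t : ℝ, (inn t + lin t) := by
        apply setIntegral_eq_integral_of_forall_compl_eq_zero
        intro t ht
        have ht' : t ∉ Icc ε T := fun hmem => ht (lt_of_lt_of_le hε hmem.1)
        rw [hinn0 t ht', hlin0 t ht']
        ring
    _ = ∫ t in Ioc (ε/2) (T+1), (inn t + lin t) := by
        symm
        apply setIntegral_eq_integral_of_forall_compl_eq_zero
        intro t ht
        rw [hinn0 t (hIcc_sub t ht), hlin0 t (hIcc_sub t ht)]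
        ring
    _ = ∫ t in (ε/2)..(T+1), (inn t + lin t) :=
        (intervalIntegral.integral_of_le (by linarith)).symm
    _ = (cL * (∫ z in Iio (0:ℝ), φ (z + X (T+1), T+1))
          + cR * (∫ z in Ioi (0:ℝ), φ (z + X (T+1), T+1)) + w (T+1) * φ (X (T+1), T+1))
        - (cL * (∫ z in Iio (0:ℝ), φ (z + X (ε/2), ε/2))
          + cR * (∫ z in Ioi (0:ℝ), φ (z + X (ε/2), ε/2)) + w (ε/2) * φ (X (ε/2), ε/2)) := by
        exact intervalIntegral.integral_eq_sub_of_hasDerivAt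
          (f := fun s => cL * (∫ z in Iio (0:ℝ), φ (z + X s, s))
            + cR * (∫ z in Ioi (0:ℝ), φ (z + X s, s)) + w s * φ (X s, s))
          (fun t htmem => by
            rw [Set.uIcc_of_le (by linarith : ε/2 ≤ T+1)] at htmem
            exact hF' t (by linarith [htmem.1]))
          ((hinnc.add hlinc).intervalIntegrable _ _)
    _ = 0 := by
        have hT1 : (T+1) ∉ Icc ε T := fun hmem => by linarith [hmem.2]
        have hε2 : (ε/2) ∉ Icc ε T := fun hmem => by linarith [hmem.1]
        have hz1 : ∀ z : ℝ, φ (z + X (T+1), T+1) = 0 := fun z => hφvan _ hT1 _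
        have hz2 : ∀ z : ℝ, φ (z + X (ε/2), ε/2) = 0 := fun z => hφvan _ hε2 _
        simp only [hz1, hz2, hφvan _ hT1, hφvan _ hε2, integral_zero, mul_zero, add_zero, sub_zero]


/-- A delta shock (piecewise-constant background plus a Dirac mass
of weight ω(t) in ρ on the curve x = X(t), with velocity u_δ(t) on the curve)
whose data satisfy the generalized Rankine–Hugoniot ODEs is a distributional
solution of the conservative system. -/
theorem delta_shock_distributional_solution
    (ρbar : ℝ) (hρbar : 0 < ρbar) (a : ℝ) (ha : a < 0)
    (ρL ρR : ℝ) (hρL : 0 < ρL) (hρR : 0 < ρR) (uL uR : ℝ)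
    (α : ℝ → ℝ) (hα : Continuous α)
    (A : ℝ → ℝ) (hA : ∀ t, A t = ∫ s in (0:ℝ)..t, α s)
    (X ω udelta : ℝ → ℝ)
    (hX : ContDiff ℝ 1 X) (hω : ContDiff ℝ 1 ω) (hudelta : ContDiff ℝ 1 udelta)
    (hX0 : X 0 = 0) (hω0 : ω 0 = 0)
    (hODE1 : ∀ t : ℝ, 0 ≤ t → deriv X t = udelta t + A t)
    (hODE2 : ∀ t : ℝ, 0 ≤ t → deriv ω t =
      -(ρL - ρR) * deriv X t
        + (ρL * (uL + A t) * (1 - (ρL / ρbar) ^ a)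
            - ρR * (uR + A t) * (1 - (ρR / ρbar) ^ a)))
    (hODE3 : ∀ t : ℝ, 0 ≤ t → deriv (fun s => ω s * udelta s) t =
      -(ρL * uL - ρR * uR) * deriv X t
        + (ρL * uL * (uL + A t) * (1 - (ρL / ρbar) ^ a)
            - ρR * uR * (uR + A t) * (1 - (ρR / ρbar) ^ a))) :
    ∀ φ : ℝ × ℝ → ℝ, ContDiff ℝ (⊤ : ℕ∞) φ → HasCompactSupport φ →
      tsupport φ ⊆ Set.univ ×ˢ Set.Ioi (0:ℝ) →
      ((∫ t in Set.Ioi (0:ℝ), ∫ y : ℝ,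
          ((if y < X t then ρL else ρR) * deriv (fun τ => φ (y, τ)) t
            + (if y < X t then ρL * (uL + A t) * (1 - (ρL / ρbar) ^ a)
                else ρR * (uR + A t) * (1 - (ρR / ρbar) ^ a))
              * deriv (fun z => φ (z, t)) y))
        + (∫ t in Set.Ioi (0:ℝ),
            ω t * (deriv (fun τ => φ (X t, τ)) t
              + deriv X t * deriv (fun z => φ (z, t)) (X t))) = 0)
      ∧ ((∫ t in Set.Ioi (0:ℝ), ∫ y : ℝ,
          ((if y < X t then ρL * uL else ρR * uR) * deriv (fun τ => φ (y, τ)) t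
            + (if y < X t then ρL * uL * (uL + A t) * (1 - (ρL / ρbar) ^ a)
                else ρR * uR * (uR + A t) * (1 - (ρR / ρbar) ^ a))
              * deriv (fun z => φ (z, t)) y))
        + (∫ t in Set.Ioi (0:ℝ),
            ω t * udelta t * (deriv (fun τ => φ (X t, τ)) t
              + deriv X t * deriv (fun z => φ (z, t)) (X t))) = 0) := by
  intro φ hφ hsupp hsub
  have hAc : Continuous A := by
    have : A = fun t => ∫ s in (0:ℝ)..t, α s := funext hA
    rw [this]
    exact intervalIntegral.continuous_primitive
      (fun a b => hα.intervalIntegrable a b) 0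
  constructor
  · exact DS_key ρL ρR
      (fun t => ρL * (uL + A t) * (1 - (ρL / ρbar) ^ a))
      (fun t => ρR * (uR + A t) * (1 - (ρR / ρbar) ^ a))
      (((continuous_const.mul (continuous_const.add hAc)).mul continuous_const))
      (((continuous_const.mul (continuous_const.add hAc)).mul continuous_const))
      X ω hX hω (fun t ht => hODE2 t ht) φ hφ hsupp hsub
  · exact DS_key (ρL * uL) (ρR * uR)
      (fun t => ρL * uL * (uL + A t) * (1 - (ρL / ρbar) ^ a))
      (fun t => ρR * uR * (uR + A t) * (1 - (ρR / ρbar) ^ a))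
      (((continuous_const.mul (continuous_const.add hAc)).mul continuous_const))
      (((continuous_const.mul (continuous_const.add hAc)).mul continuous_const))
      X (fun s => ω s * udelta s) hX (hω.mul hudelta) (fun t ht => hODE3 t ht) φ hφ hsupp hsub
end
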